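/- Set L_P' = (1/(1 − α))(1 + βK/(1 − γ)). Then for every n ≥ 1, all θ, θ' ∈ Θ, and every probability measure μ on X with ∫ V dμ < ∞, one has σ_β(P_θ^n μ, P_{θ'}^n μ) ≤ L_P |θ − θ'| ( L_P' + (α^n/(α − γ)) β ∫ V dμ ). -/

import Mathlib

open MeasureTheory ProbabilityTheory ENNReal

noncomputable section

namespace PoissonPaper

variable {X : Type*} [MeasurableSpace X]

/-- The weighted sup-norm `‖φ‖_β = sup_x |φ(x)| / (1 + β V(x))`, valued in `ℝ≥0∞`. -/
def wnorm (β : ℝ) (V : X → ℝ) (φ : X → ℝ) : ℝ≥0∞ :=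
  ⨆ x, ENNReal.ofReal (|φ x| / (1 + β * V x))

open Classical in
/-- The metric `d_β(x,y) = 2 + βV(x) + βV(y)` for `x ≠ y`, `0` on the diagonal. -/
def dBeta (β : ℝ) (V : X → ℝ) (x y : X) : ℝ :=
  if x = y then 0 else 2 + β * V x + β * V y

/-- The oscillation seminorm `|||φ|||_β = sup_{x ≠ y} |φ(x) - φ(y)| / d_β(x,y)`,
valued in `ℝ≥0∞`.  (For `x = y` the quotient is `0/0 = 0`, so the diagonal does
not contribute.) -/
def osc (β : ℝ) (V : X → ℝ) (φ : X → ℝ) : ℝ≥0∞ :=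
  ⨆ x, ⨆ y, ENNReal.ofReal (|φ x - φ y| / dBeta β V x y)

/-- Action of a kernel on functions: `(P*φ)(x) = ∫ φ(y) P(x,dy)`. -/
def act (P : Kernel X X) (φ : X → ℝ) : X → ℝ := fun x => ∫ y, φ y ∂(P x)

/-- Drift inequality `(P*V)(x) ≤ γ V(x) + K`, with the integral taken in the
lower-integral sense (recall `V ≥ 0`). -/
def Drift (P : Kernel X X) (V : X → ℝ) (γ K : ℝ) : Prop :=
  ∀ x, ∫⁻ y, ENNReal.ofReal (V y) ∂(P x) ≤ ENNReal.ofReal (γ * V x + K)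

instance bindIsFinite (μ : Measure X) [IsFiniteMeasure μ] (P : Kernel X X) [IsMarkovKernel P] :
    IsFiniteMeasure (μ.bind P) := by
  constructor
  rw [Measure.bind_apply MeasurableSet.univ (Kernel.measurable P).aemeasurable]
  calc ∫⁻ x, (P x) Set.univ ∂μ = ∫⁻ _, 1 ∂μ := by simp
    _ = μ Set.univ := by simp
    _ < ⊤ := measure_lt_top μ _

/-- The total variation measure `|μ₁ - μ₂|` of the difference of two finite measures. -/
def tv (μ₁ μ₂ : Measure X) [IsFiniteMeasure μ₁] [IsFiniteMeasure μ₂] : Measure X :=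
  (μ₁.toSignedMeasure - μ₂.toSignedMeasure).totalVariation

/-- `σ_β(μ₁, μ₂) = ∫ (1 + βV) d|μ₁ - μ₂|`. -/
def sigmaB (β : ℝ) (V : X → ℝ) (μ₁ μ₂ : Measure X) [IsFiniteMeasure μ₁] [IsFiniteMeasure μ₂] :
    ℝ :=
  ∫ x, (1 + β * V x) ∂(tv μ₁ μ₂)

/-- `σ_β(η) = ∫ (1 + βV) d|η|` for a finite signed measure `η`. -/
def sigmaS (β : ℝ) (V : X → ℝ) (η : SignedMeasure X) : ℝ :=
  ∫ x, (1 + β * V x) ∂(η.totalVariation)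

/-- `n`-fold iterate (power) of a kernel. -/
def kpow (P : Kernel X X) : ℕ → Kernel X X
  | 0 => Kernel.id
  | n + 1 => P ∘ₖ kpow P n

instance kpowIsMarkov (P : Kernel X X) [IsMarkovKernel P] : ∀ n, IsMarkovKernel (kpow P n)
  | 0 => by rw [kpow]; infer_instance
  | n + 1 => by have := kpowIsMarkov P n; rw [kpow]; infer_instance

/-- Action of a (Markov) kernel on finite signed measures, via the Jordan decomposition. -/
def sbind (P : Kernel X X) [IsMarkovKernel P] (η : SignedMeasure X) : SignedMeasure X :=
  (η.toJordanDecomposition.posPart.bind P).toSignedMeasure -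
    (η.toJordanDecomposition.negPart.bind P).toSignedMeasure



/-!
Write `μₘ = μ P_θ^m`, `νₘ = μ P_θ'^m` and `aₘ = σ_β(μₘ, νₘ)`. Passing through `νₘ P_θ` with the
triangle inequality, the contraction of `P_θ` bounds the first leg by `α aₘ`, and the Lipschitz
bound on the kernels, integrated against `νₘ`, bounds the second by
`L_P |θ - θ'| (1 + β ∫ V dνₘ)`; the drift condition gives `∫ V dνₘ ≤ γ^m ∫ V dμ + K / (1 - γ)`.
Solving the resulting linear recursion from `a₀ = 0` gives the bound.

The integrated Lipschitz bound needs `|νκ - νη| ≤ ∫ |κ x - η x| dν(x)` for the weight `1 + βV`.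
As `x ↦ |κ x - η x|` need not be measurable, this is proved for lower integrals, on each half of a
Hahn decomposition of `νκ - νη`.
-/

section TotalVariation

variable (μ₁ μ₂ μ₃ : Measure X) [IsFiniteMeasure μ₁] [IsFiniteMeasure μ₂] [IsFiniteMeasure μ₃]

lemma tv_eq_variation : tv μ₁ μ₂ = (μ₁.toSignedMeasure - μ₂.toSignedMeasure).variation :=
  SignedMeasure.totalVariation_eq_variation _

lemma tv_comm : tv μ₁ μ₂ = tv μ₂ μ₁ := by
  rw [tv, tv, ← SignedMeasure.totalVariation_neg, neg_sub]

lemma tv_self : tv μ₁ μ₁ = 0 := by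
  rw [tv, sub_self, SignedMeasure.totalVariation_zero]

lemma tv_le_add : tv μ₁ μ₂ ≤ μ₁ + μ₂ := by
  simpa [tv_eq_variation] using
    VectorMeasure.variation_sub_le (μ := μ₁.toSignedMeasure) (ν := μ₂.toSignedMeasure)

lemma tv_triangle : tv μ₁ μ₃ ≤ tv μ₁ μ₂ + tv μ₂ μ₃ := by
  simpa [tv_eq_variation] using
    VectorMeasure.variation_add_le (μ := μ₁.toSignedMeasure - μ₂.toSignedMeasure)
      (ν := μ₂.toSignedMeasure - μ₃.toSignedMeasure)

lemma add_negPart_eq_add_posPart :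
    μ₁ + (μ₁.toSignedMeasure - μ₂.toSignedMeasure).toJordanDecomposition.negPart =
      μ₂ + (μ₁.toSignedMeasure - μ₂.toSignedMeasure).toJordanDecomposition.posPart := by
  set j := (μ₁.toSignedMeasure - μ₂.toSignedMeasure).toJordanDecomposition
  have hj : μ₁.toSignedMeasure - μ₂.toSignedMeasure =
      j.posPart.toSignedMeasure - j.negPart.toSignedMeasure :=
    (SignedMeasure.toSignedMeasure_toJordanDecomposition _).symm
  rw [sub_eq_sub_iff_add_eq_add] at hj
  rw [← Measure.toSignedMeasure_eq_toSignedMeasure_iff, Measure.toSignedMeasure_add,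
    Measure.toSignedMeasure_add, hj, add_comm]

lemma le_add_tv : μ₁ ≤ μ₂ + tv μ₁ μ₂ :=
  calc μ₁ ≤ μ₁ + (μ₁.toSignedMeasure - μ₂.toSignedMeasure).toJordanDecomposition.negPart :=
        Measure.le_add_right le_rfl
    _ = μ₂ + (μ₁.toSignedMeasure - μ₂.toSignedMeasure).toJordanDecomposition.posPart :=
        add_negPart_eq_add_posPart μ₁ μ₂
    _ ≤ μ₂ + tv μ₁ μ₂ := by gcongr; exact Measure.le_add_right le_rfl

lemma exists_restrict_eq_add_tv : ∃ S, MeasurableSet S ∧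
    μ₁.restrict S = μ₂.restrict S + (tv μ₁ μ₂).restrict S ∧
    μ₂.restrict Sᶜ = μ₁.restrict Sᶜ + (tv μ₁ μ₂).restrict Sᶜ := by
  have h := add_negPart_eq_add_posPart μ₁ μ₂
  set j := (μ₁.toSignedMeasure - μ₂.toSignedMeasure).toJordanDecomposition
  have htv : tv μ₁ μ₂ = j.posPart + j.negPart := rfl
  obtain ⟨T, hT, hpos, hneg⟩ := j.mutuallySingular
  replace hpos : j.posPart.restrict T = 0 := Measure.restrict_eq_zero.mpr hpos
  replace hneg : j.negPart.restrict Tᶜ = 0 := Measure.restrict_eq_zero.mpr hneg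
  refine ⟨Tᶜ, hT.compl, ?_, ?_⟩
  · have h' := congrArg (·.restrict Tᶜ) h
    simp only [Measure.restrict_add, hneg, add_zero] at h'
    rw [h', htv, Measure.restrict_add, hneg, add_zero]
  · have h' := congrArg (·.restrict T) h
    simp only [Measure.restrict_add, hpos, add_zero] at h'
    rw [compl_compl, ← h', htv, Measure.restrict_add, hpos, zero_add]

end TotalVariation

section Mixture

variable (κ η : Kernel X X) (ν : Measure X) {f : X → ℝ≥0∞}

lemma lintegral_bind_le_add_tv [IsFiniteKernel κ] [IsFiniteKernel η] (hf : Measurable f) :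
    ∫⁻ y, f y ∂(ν.bind κ) ≤
      ∫⁻ y, f y ∂(ν.bind η) + ∫⁻ x, ∫⁻ y, f y ∂(tv (κ x) (η x)) ∂ν := by
  rw [Measure.lintegral_bind κ.measurable.aemeasurable hf.aemeasurable,
    Measure.lintegral_bind η.measurable.aemeasurable hf.aemeasurable,
    ← lintegral_add_left (hf.lintegral_kernel (κ := η))]
  refine lintegral_mono fun x => ?_
  rw [← lintegral_add_measure]
  exact lintegral_mono' (le_add_tv _ _) le_rfl

variable [IsMarkovKernel κ] [IsMarkovKernel η] [IsFiniteMeasure ν]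

lemma setLIntegral_tv_bind_le (hf : Measurable f) {S : Set X} (hS : MeasurableSet S)
    (hS_pos : (ν.bind κ).restrict S =
      (ν.bind η).restrict S + (tv (ν.bind κ) (ν.bind η)).restrict S)
    (hη : ∫⁻ y in S, f y ∂(ν.bind η) ≠ ∞) :
    ∫⁻ y in S, f y ∂(tv (ν.bind κ) (ν.bind η)) ≤
      ∫⁻ x, ∫⁻ y in S, f y ∂(tv (κ x) (η x)) ∂ν := by
  have h := lintegral_bind_le_add_tv κ η ν (hf.indicator hS)
  simp only [lintegral_indicator hS] at h
  rw [hS_pos, lintegral_add_measure] at h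
  exact (ENNReal.add_le_add_iff_left hη).mp h

lemma lintegral_tv_bind_le (hf : Measurable f) (hκ : ∫⁻ y, f y ∂(ν.bind κ) ≠ ∞)
    (hη : ∫⁻ y, f y ∂(ν.bind η) ≠ ∞) :
    ∫⁻ y, f y ∂(tv (ν.bind κ) (ν.bind η)) ≤ ∫⁻ x, ∫⁻ y, f y ∂(tv (κ x) (η x)) ∂ν := by
  obtain ⟨S, hS, hS_pos, hS_neg⟩ := exists_restrict_eq_add_tv (ν.bind κ) (ν.bind η)
  rw [tv_comm] at hS_neg
  have h_pos := setLIntegral_tv_bind_le κ η ν hf hS hS_pos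
    (ne_top_of_le_ne_top hη (setLIntegral_le_lintegral _ _))
  have h_neg := setLIntegral_tv_bind_le η κ ν hf hS.compl hS_neg
    (ne_top_of_le_ne_top hκ (setLIntegral_le_lintegral _ _))
  rw [tv_comm] at h_neg
  simp only [tv_comm (η _)] at h_neg
  calc ∫⁻ y, f y ∂(tv (ν.bind κ) (ν.bind η))
      = ∫⁻ y in S, f y ∂(tv (ν.bind κ) (ν.bind η)) +
          ∫⁻ y in Sᶜ, f y ∂(tv (ν.bind κ) (ν.bind η)) := (lintegral_add_compl _ hS).symm
    _ ≤ ∫⁻ x, ∫⁻ y in S, f y ∂(tv (κ x) (η x)) ∂ν +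
          ∫⁻ x, ∫⁻ y in Sᶜ, f y ∂(tv (κ x) (η x)) ∂ν := add_le_add h_pos h_neg
    _ ≤ ∫⁻ x, (∫⁻ y in S, f y ∂(tv (κ x) (η x)) + ∫⁻ y in Sᶜ, f y ∂(tv (κ x) (η x))) ∂ν :=
          le_lintegral_add _ _
    _ = ∫⁻ x, ∫⁻ y, f y ∂(tv (κ x) (η x)) ∂ν := by simp only [lintegral_add_compl _ hS]

end Mixture

section WeightedVariation

variable {β : ℝ} {V : X → ℝ}

lemma integrable_tv {f : X → ℝ} {μ₁ μ₂ : Measure X} [IsFiniteMeasure μ₁] [IsFiniteMeasure μ₂]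
    (h₁ : Integrable f μ₁) (h₂ : Integrable f μ₂) : Integrable f (tv μ₁ μ₂) :=
  (h₁.add_measure h₂).mono_measure (tv_le_add μ₁ μ₂)

lemma integrable_one_add_mul {μ : Measure X} [IsFiniteMeasure μ] (hV : Integrable V μ) :
    Integrable (fun x => 1 + β * V x) μ :=
  (integrable_const 1).add (hV.const_mul β)

lemma one_add_mul_nonneg {b v : ℝ} (hb : 0 ≤ b) (hv : 0 ≤ v) : 0 ≤ 1 + b * v := by
  positivity

lemma sigmaB_nonneg (hβ : 0 ≤ β) (hV0 : ∀ x, 0 ≤ V x) (μ₁ μ₂ : Measure X)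
    [IsFiniteMeasure μ₁] [IsFiniteMeasure μ₂] : 0 ≤ sigmaB β V μ₁ μ₂ :=
  integral_nonneg fun x => one_add_mul_nonneg hβ (hV0 x)

lemma sigmaB_self (μ : Measure X) [IsFiniteMeasure μ] : sigmaB β V μ μ = 0 := by
  rw [sigmaB, tv_self, integral_zero_measure]

lemma sigmaB_triangle (hβ : 0 ≤ β) (hV0 : ∀ x, 0 ≤ V x) {μ₁ μ₂ μ₃ : Measure X}
    [IsFiniteMeasure μ₁] [IsFiniteMeasure μ₂] [IsFiniteMeasure μ₃]
    (h₁ : Integrable V μ₁) (h₂ : Integrable V μ₂) (h₃ : Integrable V μ₃) :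
    sigmaB β V μ₁ μ₃ ≤ sigmaB β V μ₁ μ₂ + sigmaB β V μ₂ μ₃ := by
  have h₁₂ := integrable_tv (integrable_one_add_mul (β := β) h₁) (integrable_one_add_mul h₂)
  have h₂₃ := integrable_tv (integrable_one_add_mul (β := β) h₂) (integrable_one_add_mul h₃)
  rw [sigmaB, sigmaB, sigmaB, ← integral_add_measure h₁₂ h₂₃]
  exact integral_mono_measure (tv_triangle μ₁ μ₂ μ₃)
    (ae_of_all _ fun x => one_add_mul_nonneg hβ (hV0 x)) (h₁₂.add_measure h₂₃)

lemma ofReal_sigmaB (hβ : 0 ≤ β) (hV0 : ∀ x, 0 ≤ V x) {μ₁ μ₂ : Measure X}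
    [IsFiniteMeasure μ₁] [IsFiniteMeasure μ₂] (h₁ : Integrable V μ₁) (h₂ : Integrable V μ₂) :
    ENNReal.ofReal (sigmaB β V μ₁ μ₂) = ∫⁻ x, ENNReal.ofReal (1 + β * V x) ∂(tv μ₁ μ₂) :=
  ofReal_integral_eq_lintegral_ofReal
    (integrable_tv (integrable_one_add_mul h₁) (integrable_one_add_mul h₂))
    (ae_of_all _ fun x => one_add_mul_nonneg hβ (hV0 x))

lemma sigmaB_bind_le (hβ : 0 ≤ β) (hV0 : ∀ x, 0 ≤ V x) (hV : Measurable V)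
    (κ η : Kernel X X) [IsMarkovKernel κ] [IsMarkovKernel η]
    (hκ : ∀ x, Integrable V (κ x)) (hη : ∀ x, Integrable V (η x))
    (ν : Measure X) [IsFiniteMeasure ν]
    (hνκ : Integrable V (ν.bind κ)) (hνη : Integrable V (ν.bind η))
    {g : X → ℝ} (hg : Integrable g ν) (hκη : ∀ x, sigmaB β V (κ x) (η x) ≤ g x) :
    sigmaB β V (ν.bind κ) (ν.bind η) ≤ ∫ x, g x ∂ν := by
  have hg0 x : 0 ≤ g x := (sigmaB_nonneg hβ hV0 _ _).trans (hκη x)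
  have hw : Measurable fun x => 1 + β * V x := measurable_const.add (measurable_const.mul hV)
  rw [sigmaB, integral_eq_lintegral_of_nonneg_ae
    (ae_of_all _ fun x => one_add_mul_nonneg hβ (hV0 x)) hw.aestronglyMeasurable]
  refine ENNReal.toReal_le_of_le_ofReal (integral_nonneg hg0) ?_
  calc ∫⁻ y, ENNReal.ofReal (1 + β * V y) ∂(tv (ν.bind κ) (ν.bind η))
      ≤ ∫⁻ x, ∫⁻ y, ENNReal.ofReal (1 + β * V y) ∂(tv (κ x) (η x)) ∂ν :=
        lintegral_tv_bind_le κ η ν hw.ennreal_ofReal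
          (integrable_one_add_mul hνκ).lintegral_lt_top.ne
          (integrable_one_add_mul hνη).lintegral_lt_top.ne
    _ = ∫⁻ x, ENNReal.ofReal (sigmaB β V (κ x) (η x)) ∂ν :=
        lintegral_congr fun x => (ofReal_sigmaB hβ hV0 (hκ x) (hη x)).symm
    _ ≤ ∫⁻ x, ENNReal.ofReal (g x) ∂ν := lintegral_mono fun x => ENNReal.ofReal_le_ofReal (hκη x)
    _ = ENNReal.ofReal (∫ x, g x ∂ν) :=
        (ofReal_integral_eq_lintegral_ofReal hg (ae_of_all _ hg0)).symm

end WeightedVariation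

section Drift

variable {P : Kernel X X} {V : X → ℝ} {γ K : ℝ}

lemma integrable_of_drift (hd : Drift P V γ K) (hV : Measurable V) (hV0 : ∀ x, 0 ≤ V x)
    (x : X) : Integrable V (P x) :=
  (lintegral_ofReal_ne_top_iff_integrable hV.aestronglyMeasurable (ae_of_all _ hV0)).mp
    ((hd x).trans_lt ofReal_lt_top).ne

lemma lintegral_bind_le_of_drift (hd : Drift P V γ K) (hγ : 0 ≤ γ) (hK : 0 ≤ K)
    (hV : Measurable V) (hV0 : ∀ x, 0 ≤ V x) {ν : Measure X} [IsProbabilityMeasure ν]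
    (hν : Integrable V ν) :
    ∫⁻ y, ENNReal.ofReal (V y) ∂(ν.bind P) ≤ ENNReal.ofReal (γ * ∫ x, V x ∂ν + K) :=
  calc ∫⁻ y, ENNReal.ofReal (V y) ∂(ν.bind P)
      = ∫⁻ x, ∫⁻ y, ENNReal.ofReal (V y) ∂(P x) ∂ν :=
        Measure.lintegral_bind P.measurable.aemeasurable hV.ennreal_ofReal.aemeasurable
    _ ≤ ∫⁻ x, ENNReal.ofReal (γ * V x + K) ∂ν := lintegral_mono hd
    _ = ENNReal.ofReal (∫ x, (γ * V x + K) ∂ν) :=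
        (ofReal_integral_eq_lintegral_ofReal ((hν.const_mul γ).add (integrable_const K))
          (ae_of_all _ fun x => add_nonneg (mul_nonneg hγ (hV0 x)) hK)).symm
    _ = ENNReal.ofReal (γ * ∫ x, V x ∂ν + K) := by
        rw [integral_add (hν.const_mul γ) (integrable_const K), integral_const_mul,
          integral_const, probReal_univ, one_smul]

lemma integrable_bind_of_drift (hd : Drift P V γ K) (hγ : 0 ≤ γ) (hK : 0 ≤ K)
    (hV : Measurable V) (hV0 : ∀ x, 0 ≤ V x) {ν : Measure X} [IsProbabilityMeasure ν]
    (hν : Integrable V ν) : Integrable V (ν.bind P) :=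
  (lintegral_ofReal_ne_top_iff_integrable hV.aestronglyMeasurable (ae_of_all _ hV0)).mp
    ((lintegral_bind_le_of_drift hd hγ hK hV hV0 hν).trans_lt ofReal_lt_top).ne

lemma integral_bind_le_of_drift (hd : Drift P V γ K) (hγ : 0 ≤ γ) (hK : 0 ≤ K)
    (hV : Measurable V) (hV0 : ∀ x, 0 ≤ V x) {ν : Measure X} [IsProbabilityMeasure ν]
    (hν : Integrable V ν) : ∫ y, V y ∂(ν.bind P) ≤ γ * ∫ x, V x ∂ν + K := by
  rw [integral_eq_lintegral_of_nonneg_ae (ae_of_all _ hV0) hV.aestronglyMeasurable]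
  exact ENNReal.toReal_le_of_le_ofReal (add_nonneg (mul_nonneg hγ (integral_nonneg hV0)) hK)
    (lintegral_bind_le_of_drift hd hγ hK hV hV0 hν)

end Drift

section Iterates

lemma bind_kpow_zero (μ : Measure X) (P : Kernel X X) : μ.bind (kpow P 0) = μ := by
  simp [kpow]

lemma bind_kpow_succ (μ : Measure X) (P : Kernel X X) (n : ℕ) :
    μ.bind (kpow P (n + 1)) = (μ.bind (kpow P n)).bind P := by
  rw [Measure.bind_bind (kpow P n).measurable.aemeasurable P.measurable.aemeasurable]
  rfl

variable {P : Kernel X X} [IsMarkovKernel P] {V : X → ℝ} {γ K : ℝ} {μ : Measure X}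
  [IsProbabilityMeasure μ]

lemma integrable_bind_kpow (hd : Drift P V γ K) (hγ : 0 ≤ γ) (hK : 0 ≤ K)
    (hV : Measurable V) (hV0 : ∀ x, 0 ≤ V x) (hμ : Integrable V μ) (n : ℕ) :
    Integrable V (μ.bind (kpow P n)) := by
  induction n with
  | zero => rwa [bind_kpow_zero]
  | succ n ih => rw [bind_kpow_succ]; exact integrable_bind_of_drift hd hγ hK hV hV0 ih

lemma integral_bind_kpow_le (hd : Drift P V γ K) (hγ : 0 ≤ γ) (hγ₁ : γ < 1) (hK : 0 ≤ K)
    (hV : Measurable V) (hV0 : ∀ x, 0 ≤ V x) (hμ : Integrable V μ) (n : ℕ) :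
    ∫ x, V x ∂(μ.bind (kpow P n)) ≤ γ ^ n * ∫ x, V x ∂μ + K / (1 - γ) := by
  have hK' : 0 ≤ K / (1 - γ) := div_nonneg hK (sub_nonneg.mpr hγ₁.le)
  induction n with
  | zero => simpa [bind_kpow_zero] using hK'
  | succ n ih =>
    rw [bind_kpow_succ]
    calc ∫ x, V x ∂((μ.bind (kpow P n)).bind P)
        ≤ γ * ∫ x, V x ∂(μ.bind (kpow P n)) + K :=
          integral_bind_le_of_drift hd hγ hK hV hV0 (integrable_bind_kpow hd hγ hK hV hV0 hμ n)
      _ ≤ γ * (γ ^ n * ∫ x, V x ∂μ + K / (1 - γ)) + K := by gcongr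
      _ = γ ^ (n + 1) * ∫ x, V x ∂μ + K / (1 - γ) := by
          field_simp [(sub_pos.mpr hγ₁).ne']
          ring

end Iterates

section Recursion

variable {u : ℕ → ℝ} {a b C D : ℝ}

lemma le_closed_form_of_le_mul_add_pow (ha : 0 ≤ a) (ha₁ : a ≠ 1) (hab : a ≠ b) (hu₀ : u 0 ≤ 0)
    (hu : ∀ m, u (m + 1) ≤ a * u m + C + D * b ^ m) (n : ℕ) :
    u n ≤ C * (1 - a ^ n) / (1 - a) + D * (a ^ n - b ^ n) / (a - b) := by
  induction n with
  | zero => simpa using hu₀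
  | succ n ih =>
    calc u (n + 1) ≤ a * u n + C + D * b ^ n := hu n
      _ ≤ a * (C * (1 - a ^ n) / (1 - a) + D * (a ^ n - b ^ n) / (a - b)) + C + D * b ^ n := by
          gcongr
      _ = C * (1 - a ^ (n + 1)) / (1 - a) + D * (a ^ (n + 1) - b ^ (n + 1)) / (a - b) := by
          field_simp [sub_ne_zero.mpr ha₁.symm, sub_ne_zero.mpr hab]
          ring

lemma le_of_le_mul_add_pow (hb : 0 ≤ b) (hba : b < a) (ha₁ : a < 1) (hC : 0 ≤ C) (hD : 0 ≤ D)
    (hu₀ : u 0 ≤ 0) (hu : ∀ m, u (m + 1) ≤ a * u m + C + D * b ^ m) (n : ℕ) :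
    u n ≤ C / (1 - a) + a ^ n / (a - b) * D := by
  have h₁a : 0 < 1 - a := sub_pos.mpr ha₁
  have hab : 0 < a - b := sub_pos.mpr hba
  refine (le_closed_form_of_le_mul_add_pow (hb.trans hba.le) ha₁.ne hba.ne' hu₀ hu n).trans ?_
  have hCa : C * (1 - a ^ n) / (1 - a) ≤ C / (1 - a) := by
    gcongr
    nlinarith [pow_nonneg (hb.trans hba.le) n]
  have hDb : D * (a ^ n - b ^ n) / (a - b) ≤ a ^ n / (a - b) * D := by
    rw [div_mul_eq_mul_div, mul_comm (a ^ n)]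
    gcongr
    nlinarith [pow_nonneg hb n]
  linarith

end Recursion

section Coupling

variable {β γ K α c : ℝ} {V : X → ℝ} (P P' : Kernel X X) [IsMarkovKernel P] [IsMarkovKernel P']

lemma integral_one_add_mul (ν : Measure X) [IsProbabilityMeasure ν] (hν : Integrable V ν) :
    ∫ x, (1 + β * V x) ∂ν = 1 + β * ∫ x, V x ∂ν := by
  rw [integral_add (integrable_const 1) (hν.const_mul β), integral_const_mul, integral_const,
    probReal_univ, one_smul]

lemma sigmaB_bind_bind_le (hβ : 0 ≤ β) (hV0 : ∀ x, 0 ≤ V x) (hV : Measurable V)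
    (hγ : 0 ≤ γ) (hK : 0 ≤ K) (hd : Drift P V γ K) (hd' : Drift P' V γ K)
    (hlip : ∀ x, sigmaB β V (P x) (P' x) ≤ c * (1 + β * V x))
    {ν₁ ν₂ : Measure X} [IsProbabilityMeasure ν₁] [IsProbabilityMeasure ν₂]
    (h₁ : Integrable V ν₁) (h₂ : Integrable V ν₂) :
    sigmaB β V (ν₁.bind P) (ν₂.bind P') ≤
      sigmaB β V (ν₁.bind P) (ν₂.bind P) + c * (1 + β * ∫ x, V x ∂ν₂) := by
  have h₂P := integrable_bind_of_drift hd hγ hK hV hV0 h₂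
  have h₂P' := integrable_bind_of_drift hd' hγ hK hV hV0 h₂
  calc sigmaB β V (ν₁.bind P) (ν₂.bind P')
      ≤ sigmaB β V (ν₁.bind P) (ν₂.bind P) + sigmaB β V (ν₂.bind P) (ν₂.bind P') :=
        sigmaB_triangle hβ hV0 (integrable_bind_of_drift hd hγ hK hV hV0 h₁) h₂P h₂P'
    _ ≤ sigmaB β V (ν₁.bind P) (ν₂.bind P) + ∫ x, c * (1 + β * V x) ∂ν₂ := by
        gcongr
        exact sigmaB_bind_le hβ hV0 hV P P' (integrable_of_drift hd hV hV0)
          (integrable_of_drift hd' hV hV0) ν₂ h₂P h₂P' ((integrable_one_add_mul h₂).const_mul c)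
          hlip
    _ = sigmaB β V (ν₁.bind P) (ν₂.bind P) + c * (1 + β * ∫ x, V x ∂ν₂) := by
        rw [integral_const_mul, integral_one_add_mul ν₂ h₂]

lemma sigmaB_bind_kpow_succ_le (hβ : 0 ≤ β) (hV0 : ∀ x, 0 ≤ V x) (hV : Measurable V)
    (hγ : γ ∈ Set.Ioo 0 1) (hK : 0 ≤ K) (hd : Drift P V γ K) (hd' : Drift P' V γ K)
    (hcontr : ∀ (μ₁ μ₂ : Measure X) [IsProbabilityMeasure μ₁] [IsProbabilityMeasure μ₂],
      Integrable V μ₁ → Integrable V μ₂ →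
      sigmaB β V (μ₁.bind P) (μ₂.bind P) ≤ α * sigmaB β V μ₁ μ₂)
    (hlip : ∀ x, sigmaB β V (P x) (P' x) ≤ c * (1 + β * V x)) (hc : 0 ≤ c)
    (μ : Measure X) [IsProbabilityMeasure μ] (hμ : Integrable V μ) (m : ℕ) :
    sigmaB β V (μ.bind (kpow P (m + 1))) (μ.bind (kpow P' (m + 1))) ≤
      α * sigmaB β V (μ.bind (kpow P m)) (μ.bind (kpow P' m)) +
        c * (1 + β * (K / (1 - γ))) + c * β * (∫ x, V x ∂μ) * γ ^ m := by
  have hPm := integrable_bind_kpow hd hγ.1.le hK hV hV0 hμ m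
  have hP'm := integrable_bind_kpow hd' hγ.1.le hK hV hV0 hμ m
  simp only [bind_kpow_succ]
  calc _ ≤ _ := sigmaB_bind_bind_le P P' hβ hV0 hV hγ.1.le hK hd hd' hlip hPm hP'm
    _ ≤ α * sigmaB β V (μ.bind (kpow P m)) (μ.bind (kpow P' m)) +
          c * (1 + β * (γ ^ m * ∫ x, V x ∂μ + K / (1 - γ))) := by
        gcongr
        · exact hcontr _ _ hPm hP'm
        · exact integral_bind_kpow_le hd' hγ.1.le hγ.2 hK hV hV0 hμ m
    _ = _ := by ring

lemma sigmaB_bind_kpow_le (hβ : 0 ≤ β) (hV0 : ∀ x, 0 ≤ V x) (hV : Measurable V)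
    (hγ : γ ∈ Set.Ioo 0 1) (hK : 0 ≤ K) (hd : Drift P V γ K) (hd' : Drift P' V γ K)
    (hcontr : ∀ (μ₁ μ₂ : Measure X) [IsProbabilityMeasure μ₁] [IsProbabilityMeasure μ₂],
      Integrable V μ₁ → Integrable V μ₂ →
      sigmaB β V (μ₁.bind P) (μ₂.bind P) ≤ α * sigmaB β V μ₁ μ₂)
    (hlip : ∀ x, sigmaB β V (P x) (P' x) ≤ c * (1 + β * V x)) (hc : 0 ≤ c)
    (μ : Measure X) [IsProbabilityMeasure μ] (hμ : Integrable V μ)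
    (hα : α ∈ Set.Ioo γ 1) (n : ℕ) :
    sigmaB β V (μ.bind (kpow P n)) (μ.bind (kpow P' n)) ≤
      c * ((1 / (1 - α)) * (1 + β * (K / (1 - γ))) +
        (α ^ n / (α - γ)) * β * ∫ x, V x ∂μ) := by
  have hK' : 0 ≤ 1 + β * (K / (1 - γ)) :=
    one_add_mul_nonneg hβ (div_nonneg hK (sub_nonneg.mpr hγ.2.le))
  have hr : 0 ≤ ∫ x, V x ∂μ := integral_nonneg hV0
  calc _ ≤ c * (1 + β * (K / (1 - γ))) / (1 - α) + α ^ n / (α - γ) * (c * β * ∫ x, V x ∂μ) :=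
        le_of_le_mul_add_pow (u := fun m => sigmaB β V (μ.bind (kpow P m)) (μ.bind (kpow P' m)))
          hγ.1.le hα.1 hα.2 (by positivity) (by positivity)
          (by simp only [bind_kpow_zero, sigmaB_self, le_refl])
          (sigmaB_bind_kpow_succ_le P P' hβ hV0 hV hγ hK hd hd' hcontr hlip hc μ hμ) n
    _ = _ := by ring

end Coupling

theorem iterated_kernel_lipschitz_general
    {X : Type*} [MeasurableSpace X] {k : ℕ} {Θ : Set (EuclideanSpace ℝ (Fin k))}
    (P : Θ → Kernel X X) [∀ θ, IsMarkovKernel (P θ)]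
    (V : X → ℝ) (hVmeas : Measurable V) (hV0 : ∀ x, 0 ≤ V x)
    (β : ℝ) (hβ : 0 < β)
    (γ K : ℝ) (hγ : γ ∈ Set.Ioo (0:ℝ) 1) (hK : 0 ≤ K) (hdrift : ∀ θ, Drift (P θ) V γ K)
    (L_P : ℝ)
    (hlip : ∀ θ θ' : Θ, ∀ x,
      sigmaB β V ((P θ) x) ((P θ') x) ≤ L_P * ‖θ.1 - θ'.1‖ * (1 + β * V x))
    (α : ℝ) (hα : α ∈ Set.Ioo γ 1)
    (hsig : ∀ θ, ∀ (μ₁ μ₂ : Measure X) [IsProbabilityMeasure μ₁] [IsProbabilityMeasure μ₂],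
      Integrable V μ₁ → Integrable V μ₂ →
      sigmaB β V (μ₁.bind (P θ)) (μ₂.bind (P θ)) ≤ α * sigmaB β V μ₁ μ₂) :
    ∀ n : ℕ, 1 ≤ n → ∀ θ θ' : Θ,
      ∀ (μ : Measure X) [IsProbabilityMeasure μ], Integrable V μ →
      sigmaB β V (μ.bind (kpow (P θ) n)) (μ.bind (kpow (P θ') n)) ≤
        L_P * ‖θ.1 - θ'.1‖ *
          ((1 / (1 - α)) * (1 + β * (K / (1 - γ))) +
            (α ^ n / (α - γ)) * β * ∫ x, V x ∂μ) := by
  intro n _ θ θ' μ _ hμ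
  obtain ⟨x₀⟩ := nonempty_of_isProbabilityMeasure μ
  have hc : 0 ≤ L_P * ‖θ.1 - θ'.1‖ :=
    nonneg_of_mul_nonneg_left ((sigmaB_nonneg hβ.le hV0 _ _).trans (hlip θ θ' x₀))
      (add_pos_of_pos_of_nonneg one_pos (mul_nonneg hβ.le (hV0 x₀)))
  exact sigmaB_bind_kpow_le (P θ) (P θ') hβ.le hV0 hVmeas hγ hK (hdrift θ) (hdrift θ')
    (hsig θ) (hlip θ θ') hc μ hμ hα n

/-- Lipschitz continuity in the parameter of the iterated kernels. -/
theorem iterated_kernel_lipschitz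
    {X : Type*} [MeasurableSpace X] {k : ℕ} {Θ : Set (EuclideanSpace ℝ (Fin k))}
    (hΘ : Θ.Nonempty) (P : Θ → Kernel X X) [∀ θ, IsMarkovKernel (P θ)]
    (V : X → ℝ) (hVmeas : Measurable V) (hV0 : ∀ x, 0 ≤ V x)
    (β : ℝ) (hβ : 0 < β)
    (γ K : ℝ) (hγ : γ ∈ Set.Ioo (0:ℝ) 1) (hK : 0 ≤ K) (hdrift : ∀ θ, Drift (P θ) V γ K)
    (L_P : ℝ)
    (hlip : ∀ θ θ' : Θ, ∀ x,
      sigmaB β V ((P θ) x) ((P θ') x) ≤ L_P * ‖θ.1 - θ'.1‖ * (1 + β * V x))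
    (α : ℝ) (hα : α ∈ Set.Ioo γ 1)
    (hsig : ∀ θ, ∀ (μ₁ μ₂ : Measure X) [IsProbabilityMeasure μ₁] [IsProbabilityMeasure μ₂],
      Integrable V μ₁ → Integrable V μ₂ →
      sigmaB β V (μ₁.bind (P θ)) (μ₂.bind (P θ)) ≤ α * sigmaB β V μ₁ μ₂) :
    ∀ n : ℕ, 1 ≤ n → ∀ θ θ' : Θ,
      ∀ (μ : Measure X) [IsProbabilityMeasure μ], Integrable V μ →
      sigmaB β V (μ.bind (kpow (P θ) n)) (μ.bind (kpow (P θ') n)) ≤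
        L_P * ‖θ.1 - θ'.1‖ *
          ((1 / (1 - α)) * (1 + β * (K / (1 - γ))) +
            (α ^ n / (α - γ)) * β * ∫ x, V x ∂μ) :=
  iterated_kernel_lipschitz_general P V hVmeas hV0 β hβ γ K hγ hK hdrift L_P hlip α hα hsig

end PoissonPaper
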